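/- Let (Ω, μ) be a probability space and (Y_i)_{i∈ℤ} a family of independent, identically distributed, square-integrable real random variables with variance σ². For each fixed i ∈ ℤ there exists K₀ such that for all K ≥ K₀, the variance of f_K(i) = (2/(K·(K+3)))·(2K·Y_i + Σ_{k=1}^{K−1} a_k^K·(Y_{i−k} + Y_{i+k})) satisfies 16·σ²/K² ≤ Var(f_K(i)) ≤ 8·σ²/K. -/

import Mathlib

open MeasureTheory ProbabilityTheory

/-- The coefficient `a_k^K = Σ_{l=k+1}^{K} (l−k)/l`. -/
noncomputable def mixCoeff (k K : ℕ) : ℝ :=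
  ∑ l ∈ Finset.Icc (k + 1) K, ((l : ℝ) - (k : ℝ)) / (l : ℝ)

/-- The Local Mixup minimizer at index `i`, as a random variable:
`f_K(i) = (2/(K·(K+3)))·(2K·Y_i + Σ_{k=1}^{K−1} a_k^K·(Y_{i−k} + Y_{i+k}))`. -/
noncomputable def mixFrv {Ω : Type*} (Y : ℤ → Ω → ℝ) (K : ℕ) (i : ℤ) (ω : Ω) : ℝ :=
  (2 / ((K : ℝ) * ((K : ℝ) + 3))) *
    (2 * (K : ℝ) * Y i ω +
      ∑ k ∈ Finset.Icc 1 (K - 1), mixCoeff k K * (Y (i - (k : ℤ)) ω + Y (i + (k : ℤ)) ω))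

/-!
With `c = 2 / (K (K + 3))`, `f_K(i)` is the linear combination of the independent variables
`Y (i + d)`, `|d| < K`, with weight `c · 2K` at `d = 0` and `c · a_{|d|}` otherwise, so its
variance is `σ² c² (4K² + 2 Σ_k a_k²)`. As `0 ≤ a_k ≤ K`, the sum is at most `K³`, which gives
the upper bound for every `K`. As `a_1 ≥ (K - 1) / 2`, the sum is at least `(K - 1)² / 4`, which
exceeds the `2 (6K + 9)` needed for the lower bound once `K ≥ 100`.
-/

open Finset

lemma Finset.sum_Icc_neg_natCast {M : Type*} [AddCommGroup M] (g : ℤ → M) (n : ℕ) :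
    ∑ d ∈ Icc (-(n : ℤ)) n, g d = g 0 + ∑ k ∈ Icc 1 n, (g (-(k : ℤ)) + g k) := by
  induction n with
  | zero => simp
  | succ n ih =>
    rw [Nat.cast_succ, sum_Icc_succ_eq_add_endpoints, ih, sum_Icc_succ_top (by omega)]
    push_cast
    abel

lemma ProbabilityTheory.variance_sum_const_mul {Ω ι : Type*} [MeasurableSpace Ω]
    {μ : Measure Ω} {X : ι → Ω → ℝ} {s : Finset ι} {σ : ℝ} (w : ι → ℝ)
    (hX : ∀ j ∈ s, MemLp (X j) 2 μ) (hindep : Set.Pairwise ↑s fun j k => X j ⟂ᵢ[μ] X k)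
    (hvar : ∀ j ∈ s, variance (X j) μ = σ ^ 2) :
    variance (fun ω => ∑ j ∈ s, w j * X j ω) μ = σ ^ 2 * ∑ j ∈ s, w j ^ 2 := by
  have hsum : (fun ω => ∑ j ∈ s, w j * X j ω) = ∑ j ∈ s, fun ω => w j * X j ω := by
    ext ω
    simp only [Finset.sum_apply]
  rw [hsum, IndepFun.variance_sum (fun j hj => (hX j hj).const_mul (w j))
    (fun j hj k hk hjk => (hindep hj hk hjk).comp (measurable_const_mul _)
      (measurable_const_mul _)), mul_sum]
  refine sum_congr rfl fun j hj => ?_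
  rw [variance_const_mul, hvar j hj, mul_comm]

lemma mixCoeff_nonneg (k K : ℕ) : 0 ≤ mixCoeff k K :=
  sum_nonneg fun l hl => div_nonneg
    (sub_nonneg.2 (by exact_mod_cast (Nat.le_succ k).trans (mem_Icc.1 hl).1)) l.cast_nonneg

lemma mixCoeff_le (k K : ℕ) : mixCoeff k K ≤ K := by
  calc mixCoeff k K ≤ #(Icc (k + 1) K) • (1 : ℝ) := by
        refine sum_le_card_nsmul _ _ _ fun l hl => div_le_one_of_le₀ ?_ l.cast_nonneg
        linarith [(k.cast_nonneg : (0 : ℝ) ≤ k)]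
    _ ≤ K := by
        rw [Nat.card_Icc, nsmul_one]
        exact_mod_cast (by omega : K + 1 - (k + 1) ≤ K)

lemma sub_one_div_two_le_mixCoeff_one (K : ℕ) : ((K : ℝ) - 1) / 2 ≤ mixCoeff 1 K := by
  have hterm : ∀ l ∈ Icc (1 + 1) K, (1 : ℝ) / 2 ≤ ((l : ℝ) - (1 : ℕ)) / l := by
    intro l hl
    have hl2 : (2 : ℝ) ≤ l := by exact_mod_cast (mem_Icc.1 hl).1
    rw [le_div_iff₀ (by linarith)]
    push_cast
    linarith
  calc ((K : ℝ) - 1) / 2 ≤ #(Icc (1 + 1) K) • ((1 : ℝ) / 2) := by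
        have hcard : (K : ℝ) - 1 ≤ #(Icc (1 + 1) K) := by
          rw [Nat.card_Icc, sub_le_iff_le_add]
          exact_mod_cast (by omega : K ≤ K + 1 - (1 + 1) + 1)
        rw [nsmul_eq_mul]
        linarith
    _ ≤ mixCoeff 1 K := card_nsmul_le_sum _ _ _ hterm

noncomputable def mixWeight (K : ℕ) (d : ℤ) : ℝ :=
  2 / ((K : ℝ) * ((K : ℝ) + 3)) * if d = 0 then 2 * (K : ℝ) else mixCoeff d.natAbs K

lemma mixWeight_neg (K : ℕ) (d : ℤ) : mixWeight K (-d) = mixWeight K d := by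
  simp only [mixWeight, neg_eq_zero, Int.natAbs_neg]

lemma mixWeight_natCast (K : ℕ) {k : ℕ} (hk : k ≠ 0) :
    mixWeight K k = 2 / ((K : ℝ) * ((K : ℝ) + 3)) * mixCoeff k K := by
  rw [mixWeight, if_neg (by exact_mod_cast hk), Int.natAbs_natCast]

lemma mixFrv_eq_sum {Ω : Type*} (Y : ℤ → Ω → ℝ) (K : ℕ) (i : ℤ) :
    mixFrv Y K i =
      fun ω => ∑ d ∈ Icc (-((K - 1 : ℕ) : ℤ)) (K - 1 : ℕ), mixWeight K d * Y (i + d) ω := by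
  funext ω
  rw [sum_Icc_neg_natCast, mixFrv, mul_add, mul_sum]
  congr 1
  · simp only [mixWeight, if_pos, add_zero]
    ring
  · refine sum_congr rfl fun k hk => ?_
    rw [mixWeight_neg, mixWeight_natCast K (Nat.one_le_iff_ne_zero.1 (mem_Icc.1 hk).1),
      ← sub_eq_add_neg]
    ring

noncomputable def mixVarianceFactor (K : ℕ) : ℝ :=
  (2 / ((K : ℝ) * ((K : ℝ) + 3))) ^ 2 *
    (4 * (K : ℝ) ^ 2 + 2 * ∑ k ∈ Icc 1 (K - 1), mixCoeff k K ^ 2)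

lemma variance_mixFrv {Ω : Type*} [MeasurableSpace Ω] (μ : Measure Ω) (Y : ℤ → Ω → ℝ) (σ : ℝ)
    (hindep : iIndepFun Y μ) (hL2 : ∀ i, MemLp (Y i) 2 μ)
    (hvar : ∀ i, variance (Y i) μ = σ ^ 2) (K : ℕ) (i : ℤ) :
    variance (mixFrv Y K i) μ = σ ^ 2 * mixVarianceFactor K := by
  rw [mixFrv_eq_sum, variance_sum_const_mul (X := fun d => Y (i + d)) (mixWeight K)
    (fun d _ => hL2 _) (fun d _ e _ hde => hindep.indepFun (by omega)) (fun d _ => hvar _),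
    sum_Icc_neg_natCast, mixVarianceFactor, mixWeight, if_pos rfl]
  have hpair : ∀ k ∈ Icc 1 (K - 1), mixWeight K (-(k : ℤ)) ^ 2 + mixWeight K k ^ 2 =
      (2 / ((K : ℝ) * ((K : ℝ) + 3))) ^ 2 * 2 * mixCoeff k K ^ 2 := fun k hk => by
    rw [mixWeight_neg, mixWeight_natCast K (Nat.one_le_iff_ne_zero.1 (mem_Icc.1 hk).1)]
    ring
  rw [sum_congr rfl hpair, ← mul_sum]
  ring

lemma mixVarianceFactor_le (K : ℕ) : mixVarianceFactor K ≤ 8 / K := by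
  rcases K.eq_zero_or_pos with rfl | hK
  · simp [mixVarianceFactor]
  have hx : (0 : ℝ) < K := by exact_mod_cast hK
  have hS : ∑ k ∈ Icc 1 (K - 1), mixCoeff k K ^ 2 ≤ (K : ℝ) ^ 3 :=
    calc ∑ k ∈ Icc 1 (K - 1), mixCoeff k K ^ 2 ≤ #(Icc 1 (K - 1)) • (K : ℝ) ^ 2 :=
          sum_le_card_nsmul _ _ _ fun k _ =>
            pow_le_pow_left₀ (mixCoeff_nonneg k K) (mixCoeff_le k K) 2
      _ ≤ (K : ℝ) * (K : ℝ) ^ 2 := by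
          rw [nsmul_eq_mul]
          gcongr
          exact_mod_cast (Nat.card_Icc 1 (K - 1)).trans_le (by omega)
      _ = (K : ℝ) ^ 3 := by ring
  rw [mixVarianceFactor, div_pow, div_mul_eq_mul_div, div_le_div_iff₀ (by positivity) hx]
  nlinarith

lemma sixteen_div_sq_le_mixVarianceFactor {K : ℕ} (hK : 100 ≤ K) :
    16 / (K : ℝ) ^ 2 ≤ mixVarianceFactor K := by
  have hx : (100 : ℝ) ≤ K := by exact_mod_cast hK
  have hS : (((K : ℝ) - 1) / 2) ^ 2 ≤ ∑ k ∈ Icc 1 (K - 1), mixCoeff k K ^ 2 :=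
    calc (((K : ℝ) - 1) / 2) ^ 2 ≤ mixCoeff 1 K ^ 2 := by
          have := sub_one_div_two_le_mixCoeff_one K
          gcongr
          linarith
      _ ≤ ∑ k ∈ Icc 1 (K - 1), mixCoeff k K ^ 2 :=
          single_le_sum (fun k _ => sq_nonneg (mixCoeff k K)) (mem_Icc.2 ⟨le_rfl, by omega⟩)
  have hsum : 4 * ((K : ℝ) + 3) ^ 2 ≤
      4 * (K : ℝ) ^ 2 + 2 * ∑ k ∈ Icc 1 (K - 1), mixCoeff k K ^ 2 := by
    nlinarith
  rw [mixVarianceFactor, div_pow, div_mul_eq_mul_div,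
    div_le_div_iff₀ (by positivity) (by positivity)]
  nlinarith [mul_le_mul_of_nonneg_left hsum (sq_nonneg (K : ℝ))]

theorem localMixup_variance_bounds_general {Ω : Type*} [MeasurableSpace Ω] (μ : Measure Ω)
    (Y : ℤ → Ω → ℝ) (σ : ℝ)
    (hindep : iIndepFun Y μ)
    (hL2 : ∀ i, MemLp (Y i) 2 μ)
    (hvar : ∀ i, variance (Y i) μ = σ ^ 2)
    (i : ℤ) :
    ∃ K₀ : ℕ, ∀ K : ℕ, K₀ ≤ K →
      16 * σ ^ 2 / (K : ℝ) ^ 2 ≤ variance (mixFrv Y K i) μ ∧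
        variance (mixFrv Y K i) μ ≤ 8 * σ ^ 2 / (K : ℝ) := by
  refine ⟨100, fun K hK => ?_⟩
  rw [variance_mixFrv μ Y σ hindep hL2 hvar]
  have hσ : 0 ≤ σ ^ 2 := sq_nonneg σ
  constructor
  · calc 16 * σ ^ 2 / (K : ℝ) ^ 2 = σ ^ 2 * (16 / (K : ℝ) ^ 2) := by ring
      _ ≤ σ ^ 2 * mixVarianceFactor K :=
          mul_le_mul_of_nonneg_left (sixteen_div_sq_le_mixVarianceFactor hK) hσ
  · calc σ ^ 2 * mixVarianceFactor K ≤ σ ^ 2 * (8 / K) :=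
          mul_le_mul_of_nonneg_left (mixVarianceFactor_le K) hσ
      _ = 8 * σ ^ 2 / K := by ring

/-- For i.i.d. square-integrable random variables `(Y_i)_{i∈ℤ}` with variance
`σ²`, for each fixed `i` there exists `K₀` such that for all `K ≥ K₀`,
`16·σ²/K² ≤ Var(f_K(i)) ≤ 8·σ²/K`. -/
theorem localMixup_variance_bounds {Ω : Type*} [MeasurableSpace Ω] (μ : Measure Ω)
    [IsProbabilityMeasure μ] (Y : ℤ → Ω → ℝ) (σ : ℝ)
    (hindep : iIndepFun Y μ)
    (hident : ∀ i j : ℤ, IdentDistrib (Y i) (Y j) μ μ)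
    (hL2 : ∀ i, MemLp (Y i) 2 μ)
    (hvar : ∀ i, variance (Y i) μ = σ ^ 2)
    (i : ℤ) :
    ∃ K₀ : ℕ, ∀ K : ℕ, K₀ ≤ K →
      16 * σ ^ 2 / (K : ℝ) ^ 2 ≤ variance (mixFrv Y K i) μ ∧
        variance (mixFrv Y K i) μ ≤ 8 * σ ^ 2 / (K : ℝ) :=
  localMixup_variance_bounds_general μ Y σ hindep hL2 hvar i
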